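/- Assume h^p = 0 for some p ≥ 1. Then for every z ∈ V such that g₀(z, hⁱ(Y)) = 0 and g₀(z, hⁱ(X₀)) = 0 for all 0 ≤ i ≤ p−1, one has h(z) = 0. In particular, h is entirely determined by its values on the 2p vectors Y, h(Y), …, h^{p−1}(Y), X₀, h(X₀), …, h^{p−1}(X₀). -/
import Mathlib


/-- If `h ^ p = 0` and `z` is `g₀`-orthogonal to all `hⁱ Y` and `hⁱ X₀` for `0 ≤ i ≤ p - 1`,
then `h z = 0`. -/
theorem stmt1 {V : Type*} [AddCommGroup V] [Module ℝ V] [FiniteDimensional ℝ V]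
    (g₀ : V →ₗ[ℝ] V →ₗ[ℝ] ℝ) (hg₀symm : ∀ u v : V, g₀ u v = g₀ v u)
    (h : V →ₗ[ℝ] V) (hsymm : ∀ u v : V, g₀ (h u) v = g₀ u (h v))
    (Y X₀ : V) (hYY : g₀ Y Y = -1) (hXX : g₀ X₀ X₀ = -1) (hYX : g₀ Y X₀ = 0)
    (hpos : ∀ w : V, w ≠ 0 → g₀ w Y = 0 → g₀ w X₀ = 0 → 0 < g₀ w w)
    (p : ℕ) (hp : 1 ≤ p) (hnil : h ^ p = 0)
    (z : V)
    (hz1 : ∀ i : ℕ, i ≤ p - 1 → g₀ z ((h ^ i) Y) = 0)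
    (hz2 : ∀ i : ℕ, i ≤ p - 1 → g₀ z ((h ^ i) X₀) = 0) :
    h z = 0 := by
  -- iterated symmetry of h with respect to g₀
  have symk : ∀ (k : ℕ) (u v : V), g₀ ((h ^ k) u) v = g₀ u ((h ^ k) v) := by
    intro k
    induction k with
    | zero => intro u v; simp
    | succ n ih =>
      intro u v
      calc g₀ ((h ^ (n + 1)) u) v = g₀ ((h ^ n) (h u)) v := by
            rw [pow_succ, Module.End.mul_apply]
        _ = g₀ (h u) ((h ^ n) v) := ih (h u) v
        _ = g₀ u (h ((h ^ n) v)) := hsymm u ((h ^ n) v)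
        _ = g₀ u ((h ^ (n + 1)) v) := by rw [pow_succ', Module.End.mul_apply]
  -- h^k kills Y and X₀ in pairing with z, for every k
  have hky : ∀ k : ℕ, g₀ z ((h ^ k) Y) = 0 := by
    intro k
    by_cases hk : k ≤ p - 1
    · exact hz1 k hk
    · have hkp : k = (k - p) + p := by omega
      rw [hkp, pow_add, Module.End.mul_apply, hnil]
      simp
  have hkx : ∀ k : ℕ, g₀ z ((h ^ k) X₀) = 0 := by
    intro k
    by_cases hk : k ≤ p - 1
    · exact hz2 k hk
    · have hkp : k = (k - p) + p := by omega
      rw [hkp, pow_add, Module.End.mul_apply, hnil]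
      simp
  -- a vector orthogonal to Y, X₀ with zero self-pairing vanishes
  have zeroW : ∀ w : V, g₀ w Y = 0 → g₀ w X₀ = 0 → g₀ w w = 0 → w = 0 := by
    intro w h1 h2 h3
    by_contra hw
    exact absurd h3 (ne_of_gt (hpos w hw h1 h2))
  -- downward induction
  have key : ∀ i : ℕ, i ≤ p - 1 → (h ^ (p - i)) z = 0 := by
    intro i
    induction i with
    | zero =>
      intro _
      simp only [Nat.sub_zero, hnil, LinearMap.zero_apply]
    | succ i ih =>
      intro hi
      have hprev : (h ^ (p - i)) z = 0 := ih (by omega)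
      set k := p - (i + 1) with hk
      have hk1 : 1 ≤ k := by omega
      have hsum : k + k = (k + k - (p - i)) + (p - i) := by omega
      have gww : g₀ ((h ^ k) z) ((h ^ k) z) = 0 := by
        rw [symk k z ((h ^ k) z)]
        have : (h ^ k) ((h ^ k) z) = 0 := by
          rw [← Module.End.mul_apply, ← pow_add, hsum, pow_add, Module.End.mul_apply,
            hprev, map_zero]
        rw [this, map_zero]
      have gwY : g₀ ((h ^ k) z) Y = 0 := by rw [symk]; exact hky k
      have gwX : g₀ ((h ^ k) z) X₀ = 0 := by rw [symk]; exact hkx k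
      exact zeroW _ gwY gwX gww
  have h1 : (h ^ (p - (p - 1))) z = 0 := key (p - 1) le_rfl
  have hpe : p - (p - 1) = 1 := by omega
  rw [hpe, pow_one] at h1
  exact h1
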